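/- Let $n \ge 1$, let $w$ be a weight on $\mathbb{R}^n$, let $Q$ be a cube, and let $\delta > 0$. Then $\frac{1}{|Q|} \int_Q w^{1+\delta} \le \left( \frac{1}{|Q|} \int_Q w \right)^{1+\delta} + 2^n \frac{\delta}{\delta + 1} \frac{1}{|Q|} \int_Q (M_{d,Q} w)^{1+\delta}$, where $M_{d,Q}$ denotes the dyadic maximal operator relative to $Q$, i.e., $M_{d,Q} v(x) = \sup \{ \frac{1}{|R|} \int_R |v| : R \in \mathcal{D}(Q), \, x \in R \}$ with $\mathcal{D}(Q)$ the family of dyadic subcubes of $Q$. -/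

import Mathlib

/-!
Write `ν = w dx` on `Q` and `M = M_{d,Q} w`. Lebesgue differentiation along the shrinking dyadic
cubes gives `w ≤ M` a.e. on `Q`, so `∫_Q w^(1+δ) = ∫_Q w^δ dν ≤ ∫_Q M^δ dν`, and the layer-cake
formula writes the latter as `∫_0^∞ δ t^(δ-1) ν({M > t}) dt`. For `t ≤ ⨍_Q w` the integrand is
at most `δ t^(δ-1) w(Q)`, which integrates to `(⨍_Q w)^(1+δ) |Q|`. For `t > ⨍_Q w` the set
`{M > t}` is the union of the maximal dyadic cubes with average above `t` (Calderón–Zygmund);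
each of them has a parent with average at most `t`, whence `ν({M > t}) ≤ 2ⁿ t |{M > t}|`.
Since `δ t^δ = δ/(δ+1) · (1+δ) t^δ`, the layer-cake formula for `∫_Q M^(1+δ)` then gives the
second term.
-/

open MeasureTheory ENNReal Metric Set Filter

noncomputable section

/-- The uncentered Hardy–Littlewood maximal operator over axis-parallel cubes.
Axis-parallel cubes in `ℝⁿ = Fin n → ℝ` are exactly the closed balls of the
sup metric, so a cube with center `c` and side length `2r` is `closedBall c r`. -/
def maxOp (n : ℕ) (f : (Fin n → ℝ) → ℝ≥0∞) (x : Fin n → ℝ) : ℝ≥0∞ :=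
  ⨆ (c : Fin n → ℝ) (r : ℝ) (_ : 0 < r) (_ : x ∈ closedBall c r),
    (volume (closedBall c r))⁻¹ * ∫⁻ y in closedBall c r, f y

/-- `ℝ≥0∞`-valued characteristic function of a set. -/
def chi (n : ℕ) (Q : Set (Fin n → ℝ)) : (Fin n → ℝ) → ℝ≥0∞ := Q.indicator 1

/-- The `C_p`-tail of the weight `w` at the cube `Q`: `∫_{ℝⁿ} (Mχ_Q)^p w`. -/
def cpTail (n : ℕ) (p : ℝ) (w : (Fin n → ℝ) → ℝ) (Q : Set (Fin n → ℝ)) : ℝ≥0∞ :=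
  ∫⁻ x, (maxOp n (chi n Q) x) ^ p * ENNReal.ofReal (w x)

/-- The `C_p` constant `[w]_{C_p} = sup_Q (∫_Q M(χ_Q w)) / (∫_{ℝⁿ} (Mχ_Q)^p w)`. -/
def cpConst (n : ℕ) (p : ℝ) (w : (Fin n → ℝ) → ℝ) : ℝ≥0∞ :=
  ⨆ (c : Fin n → ℝ) (r : ℝ) (_ : 0 < r),
    (∫⁻ x in closedBall c r,
        maxOp n ((closedBall c r).indicator fun y => ENNReal.ofReal (w y)) x) /
      cpTail n p w (closedBall c r)


/-- The dyadic subcube of `Q = closedBall c r` of generation `m` indexed by `j`. -/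
def dyadicSub {n : ℕ} (c : Fin n → ℝ) (r : ℝ) (m : ℕ) (j : Fin n → ℕ) :
    Set (Fin n → ℝ) :=
  closedBall (fun i => c i - r + (2 * (j i : ℝ) + 1) * (r / 2 ^ m)) (r / 2 ^ m)

/-- The dyadic maximal operator relative to the cube `Q = closedBall c r`. -/
def dyadicMax {n : ℕ} (c : Fin n → ℝ) (r : ℝ) (v : (Fin n → ℝ) → ℝ≥0∞)
    (x : Fin n → ℝ) : ℝ≥0∞ :=
  ⨆ (m : ℕ) (j : Fin n → ℕ) (_ : ∀ i, j i < 2 ^ m) (_ : x ∈ dyadicSub c r m j),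
    (volume (dyadicSub c r m j))⁻¹ * ∫⁻ y in dyadicSub c r m j, v y

open Topology

section LayerCake

theorem lintegral_Ioc_ofReal_mul_rpow_sub_one {p : ℝ} (hp : 0 < p) {b : ℝ} (hb : 0 ≤ b) :
    ∫⁻ t in Ioc 0 b, ENNReal.ofReal (p * t ^ (p - 1)) = ENNReal.ofReal (b ^ p) := by
  have hint : IntegrableOn (fun t : ℝ => p * t ^ (p - 1)) (Ioc 0 b) :=
    (intervalIntegrable_iff_integrableOn_Ioc_of_le hb).1
      ((intervalIntegral.intervalIntegrable_rpow' (by linarith)).const_mul p)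
  rw [← ofReal_integral_eq_lintegral_ofReal hint
    ((ae_restrict_mem measurableSet_Ioc).mono fun t ht =>
      mul_nonneg hp.le (Real.rpow_nonneg ht.1.le _)),
    ← intervalIntegral.integral_of_le hb, intervalIntegral.integral_const_mul,
    integral_rpow (Or.inl (by linarith)), sub_add_cancel, Real.zero_rpow hp.ne', sub_zero,
    mul_div_cancel₀ _ hp.ne']

theorem lintegral_Ioi_indicator_ofReal_lt {p : ℝ} (hp : 0 < p) (a : ℝ≥0∞) :
    ∫⁻ t in Ioi 0, {t : ℝ | ENNReal.ofReal t < a}.indicator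
      (fun t => ENNReal.ofReal (p * t ^ (p - 1))) t = a ^ p := by
  rw [lintegral_indicator (measurableSet_lt ENNReal.measurable_ofReal measurable_const),
    Measure.restrict_restrict (measurableSet_lt ENNReal.measurable_ofReal measurable_const)]
  rcases eq_or_ne a ⊤ with rfl | ha
  · simp only [ENNReal.ofReal_lt_top, ofPred_true, univ_inter, ENNReal.top_rpow_of_pos hp]
    refine top_le_iff.1 (le_of_tendsto (ENNReal.tendsto_ofReal_atTop.comp
      (tendsto_rpow_atTop hp)) ((eventually_ge_atTop 0).mono fun b hb => ?_))
    rw [Function.comp_apply, ← lintegral_Ioc_ofReal_mul_rpow_sub_one hp hb]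
    exact lintegral_mono_set Ioc_subset_Ioi_self
  · have hset : {t : ℝ | ENNReal.ofReal t < a} ∩ Ioi 0 = Ioo 0 a.toReal := by
      ext t
      rw [mem_inter_iff, mem_ofPred_eq, mem_Ioi, mem_Ioo, and_comm]
      exact and_congr_right fun ht : 0 < t => ENNReal.ofReal_lt_iff_lt_toReal ht.le ha
    rw [hset, Measure.restrict_congr_set Ioo_ae_eq_Ioc,
      lintegral_Ioc_ofReal_mul_rpow_sub_one hp ENNReal.toReal_nonneg,
      ← ENNReal.ofReal_rpow_of_nonneg ENNReal.toReal_nonneg hp.le, ENNReal.ofReal_toReal ha]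


variable {X : Type*} [MeasurableSpace X] {ν : Measure X} [SFinite ν] {f M : X → ℝ≥0∞}

theorem lintegral_rpow_eq_lintegral_meas_ofReal_lt_mul (hM : Measurable M) {p : ℝ} (hp : 0 < p) :
    ∫⁻ x, M x ^ p ∂ν =
      ∫⁻ t in Ioi 0, ENNReal.ofReal (p * t ^ (p - 1)) * ν {x | ENNReal.ofReal t < M x} := by
  have hS : MeasurableSet {q : X × ℝ | ENNReal.ofReal q.2 < M q.1} :=
    measurableSet_lt (ENNReal.measurable_ofReal.comp measurable_snd) (hM.comp measurable_fst)
  simp_rw [← lintegral_Ioi_indicator_ofReal_lt hp (M _)]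
  rw [lintegral_lintegral_swap]
  · refine lintegral_congr fun t => ?_
    exact lintegral_indicator_const (measurableSet_lt measurable_const hM) _
  · exact ((ENNReal.measurable_ofReal.comp
      ((measurable_snd.pow_const _).const_mul p)).indicator hS).aemeasurable

theorem lintegral_mul_rpow_eq_lintegral_setLIntegral_lt (hf : AEMeasurable f ν)
    (hM : Measurable M) {p : ℝ} (hp : 0 < p) :
    ∫⁻ x, f x * M x ^ p ∂ν = ∫⁻ t in Ioi 0,
      ENNReal.ofReal (p * t ^ (p - 1)) * ∫⁻ x in {x | ENNReal.ofReal t < M x}, f x ∂ν := by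
  refine (lintegral_withDensity_eq_lintegral_mul₀ hf (hM.pow_const p).aemeasurable).symm.trans ?_
  rw [lintegral_rpow_eq_lintegral_meas_ofReal_lt_mul hM hp]
  refine lintegral_congr fun t => ?_
  rw [withDensity_apply _ (measurableSet_lt measurable_const hM)]

theorem setLIntegral_Ioi_toReal_le_of_weakType (hM : Measurable M) {A C : ℝ≥0∞} (hA : A ≠ ⊤)
    (hweak : ∀ t, A < t → ∫⁻ x in {x | t < M x}, f x ∂ν ≤ C * t * ν {x | t < M x})
    {δ : ℝ} (hδ : 0 < δ) :
    ∫⁻ t in Ioi A.toReal, ENNReal.ofReal (δ * t ^ (δ - 1)) *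
        ∫⁻ x in {x | ENNReal.ofReal t < M x}, f x ∂ν ≤
      C * ENNReal.ofReal (δ / (δ + 1)) * ∫⁻ x, M x ^ (1 + δ) ∂ν := by
  have hpoint : ∀ t ∈ Ioi A.toReal, ENNReal.ofReal (δ * t ^ (δ - 1)) *
      ∫⁻ x in {x | ENNReal.ofReal t < M x}, f x ∂ν ≤ C * ENNReal.ofReal (δ / (δ + 1)) *
        (ENNReal.ofReal ((1 + δ) * t ^ (1 + δ - 1)) * ν {x | ENNReal.ofReal t < M x}) := by
    intro t ht
    have ht0 : 0 < t := ENNReal.toReal_nonneg.trans_lt ht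
    have hAt : A < ENNReal.ofReal t := by
      rw [← ENNReal.ofReal_toReal hA]
      exact (ENNReal.ofReal_lt_ofReal_iff ht0).2 ht
    have hid : δ * t ^ (δ - 1) * t = δ / (δ + 1) * ((1 + δ) * t ^ (1 + δ - 1)) := by
      rw [mul_assoc, ← Real.rpow_add_one ht0.ne', sub_add_cancel, add_sub_cancel_left]
      field_simp
      ring
    calc _ ≤ ENNReal.ofReal (δ * t ^ (δ - 1)) *
          (C * ENNReal.ofReal t * ν {x | ENNReal.ofReal t < M x}) := by
          gcongr; exact hweak _ hAt
      _ = _ := by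
          rw [mul_comm C, mul_assoc, mul_assoc, ← mul_assoc (ENNReal.ofReal _),
            ← ENNReal.ofReal_mul (by positivity), hid, ENNReal.ofReal_mul (by positivity)]
          ring
  have hmeas : Measurable fun t : ℝ => ENNReal.ofReal ((1 + δ) * t ^ (1 + δ - 1)) *
      ν {x | ENNReal.ofReal t < M x} :=
    (by fun_prop : Measurable fun t : ℝ => ENNReal.ofReal ((1 + δ) * t ^ (1 + δ - 1))).mul
      (Antitone.measurable fun s t hst =>
        measure_mono fun x hx => (ENNReal.ofReal_le_ofReal hst).trans_lt hx)
  calc _ ≤ ∫⁻ t in Ioi A.toReal, C * ENNReal.ofReal (δ / (δ + 1)) *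
        (ENNReal.ofReal ((1 + δ) * t ^ (1 + δ - 1)) * ν {x | ENNReal.ofReal t < M x}) :=
        setLIntegral_mono (hmeas.const_mul _) hpoint
    _ ≤ ∫⁻ t in Ioi 0, C * ENNReal.ofReal (δ / (δ + 1)) *
        (ENNReal.ofReal ((1 + δ) * t ^ (1 + δ - 1)) * ν {x | ENNReal.ofReal t < M x}) :=
        lintegral_mono_set (Ioi_subset_Ioi ENNReal.toReal_nonneg)
    _ = _ := by
        rw [lintegral_const_mul _ hmeas,
          lintegral_rpow_eq_lintegral_meas_ofReal_lt_mul hM (by linarith)]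

theorem lintegral_rpow_one_add_le_of_weakType (hf : AEMeasurable f ν) (hM : Measurable M)
    (hfM : f ≤ᵐ[ν] M) {A C : ℝ≥0∞} (hA : A ≠ ⊤) (hfA : ∫⁻ x, f x ∂ν ≤ A * ν univ)
    (hweak : ∀ t, A < t → ∫⁻ x in {x | t < M x}, f x ∂ν ≤ C * t * ν {x | t < M x})
    {δ : ℝ} (hδ : 0 < δ) :
    ∫⁻ x, f x ^ (1 + δ) ∂ν ≤
      A ^ (1 + δ) * ν univ + C * ENNReal.ofReal (δ / (δ + 1)) * ∫⁻ x, M x ^ (1 + δ) ∂ν := by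
  have hT : 0 ≤ A.toReal := ENNReal.toReal_nonneg
  have hlow : ∫⁻ t in Ioc 0 A.toReal, ENNReal.ofReal (δ * t ^ (δ - 1)) *
      ∫⁻ x in {x | ENNReal.ofReal t < M x}, f x ∂ν ≤ A ^ (1 + δ) * ν univ := by
    calc _ ≤ ∫⁻ t in Ioc 0 A.toReal, ENNReal.ofReal (δ * t ^ (δ - 1)) * (A * ν univ) :=
          lintegral_mono fun t => by gcongr; exact (setLIntegral_le_lintegral _ _).trans hfA
      _ = A ^ δ * (A * ν univ) := by
          rw [lintegral_mul_const _ (by fun_prop), lintegral_Ioc_ofReal_mul_rpow_sub_one hδ hT,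
            ← ENNReal.ofReal_rpow_of_nonneg hT hδ.le, ENNReal.ofReal_toReal hA]
      _ = A ^ (1 + δ) * ν univ := by
          rw [ENNReal.rpow_add_of_nonneg _ _ zero_le_one hδ.le, ENNReal.rpow_one]; ring
  calc ∫⁻ x, f x ^ (1 + δ) ∂ν = ∫⁻ x, f x * f x ^ δ ∂ν := by
        simp_rw [ENNReal.rpow_add_of_nonneg _ _ zero_le_one hδ.le, ENNReal.rpow_one]
    _ ≤ ∫⁻ x, f x * M x ^ δ ∂ν := lintegral_mono_ae (hfM.mono fun x hx => by gcongr)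
    _ = _ := lintegral_mul_rpow_eq_lintegral_setLIntegral_lt hf hM hδ
    _ = _ := by
        rw [← Ioc_union_Ioi_eq_Ioi hT, lintegral_union measurableSet_Ioi (Ioc_disjoint_Ioi le_rfl)]
    _ ≤ _ := add_le_add hlow (setLIntegral_Ioi_toReal_le_of_weakType hM hA hweak hδ)

end LayerCake

section DyadicInterval

def dyadicIcc (a t : ℝ) (m j : ℕ) : Set ℝ := Icc (a + t / 2 ^ m * j) (a + t / 2 ^ m * (j + 1))

variable {a t : ℝ}

theorem dyadicIcc_zero_zero (a t : ℝ) : dyadicIcc a t 0 0 = Icc a (a + t) := by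
  simp [dyadicIcc]

theorem dyadicIcc_subset_of_le (ht : 0 ≤ t) {m k : ℕ} (hmk : m ≤ k) (j : ℕ) :
    dyadicIcc a t k j ⊆ dyadicIcc a t m (j / 2 ^ (k - m)) := by
  obtain ⟨d, rfl⟩ := Nat.exists_eq_add_of_le hmk
  have hstep : t / 2 ^ m = t / 2 ^ (m + d) * 2 ^ d := by
    rw [pow_add]; field_simp
  have hlo : ((j / 2 ^ d : ℕ) : ℝ) * 2 ^ d ≤ j := by exact_mod_cast Nat.div_mul_le_self j (2 ^ d)
  have hhi : (j : ℝ) + 1 ≤ ((j / 2 ^ d : ℕ) + 1) * 2 ^ d := by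
    exact_mod_cast (add_one_mul (j / 2 ^ d) (2 ^ d)).symm ▸ Nat.lt_div_mul_add (pow_pos two_pos d)
  have hs : 0 ≤ t / 2 ^ (m + d) := by positivity
  rw [Nat.add_sub_cancel_left, dyadicIcc, dyadicIcc, hstep]
  refine Icc_subset_Icc ?_ ?_
  · nlinarith
  · nlinarith

theorem volume_dyadicIcc_inter_eq_zero (ht : 0 ≤ t) (m : ℕ) {j j' : ℕ} (hjj' : j ≠ j') :
    volume (dyadicIcc a t m j ∩ dyadicIcc a t m j') = 0 := by
  wlog hlt : j < j' generalizing j j'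
  · rw [inter_comm]; exact this hjj'.symm (hjj'.lt_or_gt.resolve_left hlt)
  have hs : 0 ≤ t / 2 ^ m := by positivity
  have hle : (j : ℝ) + 1 ≤ j' := by exact_mod_cast hlt
  refine measure_mono_null (t := Icc (a + t / 2 ^ m * j') (a + t / 2 ^ m * (j + 1)))
    (fun x hx => ⟨hx.2.1, hx.1.2⟩) ?_
  rw [Real.volume_Icc, ENNReal.ofReal_eq_zero]
  nlinarith

theorem exists_mem_dyadicIcc (ht : 0 < t) {x : ℝ} (hx : x ∈ Icc a (a + t)) (m : ℕ) :
    ∃ j < 2 ^ m, x ∈ dyadicIcc a t m j := by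
  have hs : 0 < t / 2 ^ m := by positivity
  set y := (x - a) / (t / 2 ^ m)
  have hy0 : 0 ≤ y := div_nonneg (by linarith [hx.1]) hs.le
  have hy : y ≤ 2 ^ m := by
    rw [div_le_iff₀ hs, mul_div_cancel₀ _ (by positivity)]; linarith [hx.2]
  -- Clipping at `2 ^ m - 1` is needed only at the right endpoint `x = a + t`.
  have hsucc : min (2 ^ m - 1) ⌊y⌋₊ + 1 = min (2 ^ m) (⌊y⌋₊ + 1) := by
    have := Nat.one_le_two_pow (n := m)
    generalize 2 ^ m = N at this ⊢
    omega
  have hlo : ((min (2 ^ m - 1) ⌊y⌋₊ : ℕ) : ℝ) ≤ y :=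
    (Nat.cast_le.2 (min_le_right _ _)).trans (Nat.floor_le hy0)
  have hhi : y ≤ ((min (2 ^ m - 1) ⌊y⌋₊ : ℕ) : ℝ) + 1 := by
    rw [← Nat.cast_add_one, hsucc, Nat.cast_min, Nat.cast_pow, Nat.cast_ofNat, Nat.cast_add_one]
    exact le_min hy (Nat.lt_floor_add_one y).le
  refine ⟨min (2 ^ m - 1) ⌊y⌋₊, (min_le_left _ _).trans_lt (Nat.sub_lt (by positivity) one_pos),
    ?_, ?_⟩
  · have := (le_div_iff₀ hs).1 hlo
    linarith
  · have := (div_le_iff₀ hs).1 hhi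
    linarith

end DyadicInterval

section DyadicCube

variable {n : ℕ} {c : Fin n → ℝ} {r : ℝ}

theorem dyadicSub_eq_pi (hr : 0 ≤ r) (m : ℕ) (j : Fin n → ℕ) :
    dyadicSub c r m j = univ.pi fun i => dyadicIcc (c i - r) (2 * r) m (j i) := by
  rw [dyadicSub, closedBall_pi _ (by positivity)]
  refine congrArg (univ.pi) (funext fun i => ?_)
  rw [Real.closedBall_eq_Icc, dyadicIcc]
  congr 1 <;> ring

theorem dyadicSub_zero_zero (c : Fin n → ℝ) (r : ℝ) : dyadicSub c r 0 0 = closedBall c r := by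
  simp [dyadicSub]

theorem dyadicSub_subset_of_le (hr : 0 ≤ r) {m k : ℕ} (hmk : m ≤ k) (j : Fin n → ℕ) :
    dyadicSub c r k j ⊆ dyadicSub c r m (fun i => j i / 2 ^ (k - m)) := by
  rw [dyadicSub_eq_pi hr, dyadicSub_eq_pi hr]
  exact pi_mono fun i _ => dyadicIcc_subset_of_le (by positivity) hmk (j i)

theorem dyadicSub_subset_closedBall (hr : 0 ≤ r) {m : ℕ} {j : Fin n → ℕ}
    (hj : ∀ i, j i < 2 ^ m) : dyadicSub c r m j ⊆ closedBall c r := by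
  have h := dyadicSub_subset_of_le (c := c) hr (Nat.zero_le m) j
  simp only [Nat.sub_zero, Nat.div_eq_of_lt (hj _)] at h
  rwa [← dyadicSub_zero_zero]

theorem exists_mem_dyadicSub (hr : 0 < r) {x : Fin n → ℝ} (hx : x ∈ closedBall c r) (m : ℕ) :
    ∃ j : Fin n → ℕ, (∀ i, j i < 2 ^ m) ∧ x ∈ dyadicSub c r m j := by
  rw [← dyadicSub_zero_zero, dyadicSub_eq_pi hr.le, mem_univ_pi] at hx
  choose j hj hxj using fun i =>
    exists_mem_dyadicIcc (by positivity) (dyadicIcc_zero_zero _ _ ▸ hx i) m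
  exact ⟨j, hj, by rw [dyadicSub_eq_pi hr.le, mem_univ_pi]; exact hxj⟩

theorem volume_dyadicSub_inter_eq_zero (hr : 0 ≤ r) (m : ℕ) {j j' : Fin n → ℕ} (hjj' : j ≠ j') :
    volume (dyadicSub c r m j ∩ dyadicSub c r m j') = 0 := by
  obtain ⟨i, hi⟩ := Function.ne_iff.1 hjj'
  rw [dyadicSub_eq_pi hr, dyadicSub_eq_pi hr, ← pi_inter_distrib, volume_pi_pi]
  exact Finset.prod_eq_zero (Finset.mem_univ i)
    (volume_dyadicIcc_inter_eq_zero (by positivity) m hi)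

theorem volume_dyadicSub (hr : 0 ≤ r) (m : ℕ) (j : Fin n → ℕ) :
    volume (dyadicSub c r m j) = ENNReal.ofReal ((2 * (r / 2 ^ m)) ^ n) := by
  rw [dyadicSub, Real.volume_pi_closedBall _ (by positivity), Fintype.card_fin]

theorem volume_dyadicSub_ne_zero (hr : 0 < r) (m : ℕ) (j : Fin n → ℕ) :
    volume (dyadicSub c r m j) ≠ 0 := by
  rw [volume_dyadicSub hr.le, Ne, ENNReal.ofReal_eq_zero, not_le]
  positivity

theorem volume_dyadicSub_ne_top (hr : 0 ≤ r) (m : ℕ) (j : Fin n → ℕ) :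
    volume (dyadicSub c r m j) ≠ ⊤ := by
  rw [volume_dyadicSub hr]
  exact ENNReal.ofReal_ne_top

theorem volume_dyadicSub_eq_two_pow_mul_succ (hr : 0 ≤ r) (m : ℕ) (j j' : Fin n → ℕ) :
    volume (dyadicSub c r m j) = 2 ^ n * volume (dyadicSub c r (m + 1) j') := by
  rw [volume_dyadicSub hr, volume_dyadicSub hr, ← ENNReal.ofReal_ofNat 2,
    ← ENNReal.ofReal_pow zero_le_two, ← ENNReal.ofReal_mul (by positivity), ← mul_pow, pow_succ]
  congr 2
  field_simp

theorem measurable_dyadicMax (v : (Fin n → ℝ) → ℝ≥0∞) : Measurable (dyadicMax c r v) := by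
  classical
  refine Measurable.iSup fun m => Measurable.iSup fun j => Measurable.iSup fun _ => ?_
  simp only [iSup_eq_if]
  exact Measurable.ite measurableSet_closedBall measurable_const measurable_const

theorem le_dyadicMax {v : (Fin n → ℝ) → ℝ≥0∞} {x : Fin n → ℝ} {m : ℕ} {j : Fin n → ℕ}
    (hj : ∀ i, j i < 2 ^ m) (hx : x ∈ dyadicSub c r m j) :
    (volume (dyadicSub c r m j))⁻¹ * ∫⁻ y in dyadicSub c r m j, v y ≤ dyadicMax c r v x :=
  le_iSup_of_le m (le_iSup_of_le j (le_iSup_of_le hj (le_iSup_of_le hx le_rfl)))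

theorem ae_le_dyadicMax (hr : 0 < r) {g : (Fin n → ℝ) → ℝ≥0∞} (hg : AEMeasurable g)
    (hfin : ∫⁻ y in closedBall c r, g y ≠ ⊤) :
    ∀ᵐ x, x ∈ closedBall c r → g x ≤ dyadicMax c r g x := by
  have hf : AEMeasurable ((closedBall c r).indicator g) := hg.indicator measurableSet_closedBall
  have hfin' : ∫⁻ y, (closedBall c r).indicator g y ≠ ⊤ := by
    rwa [lintegral_indicator measurableSet_closedBall]
  filter_upwards [(IsUnifLocDoublingMeasure.vitaliFamily volume 1).ae_tendsto_lintegral_div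
    hf hfin'] with x hx hxQ
  choose j hj hxj using exists_mem_dyadicSub hr hxQ
  have hsides : Tendsto (fun m : ℕ => r / 2 ^ m) atTop (𝓝[>] 0) :=
    tendsto_nhdsWithin_iff.2 ⟨tendsto_const_nhds.div_atTop
      (tendsto_pow_atTop_atTop_of_one_lt one_lt_two),
      Eventually.of_forall fun m => mem_Ioi.2 (by positivity)⟩
  -- Each dyadic cube through `x` is a ball of radius `r / 2 ^ m` containing `x`.
  have hcubes : Tendsto (fun m => dyadicSub c r m (j m)) atTop
      ((IsUnifLocDoublingMeasure.vitaliFamily volume 1).filterAt x) :=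
    IsUnifLocDoublingMeasure.tendsto_closedBall_filterAt volume _ _ hsides
      (Eventually.of_forall fun m => by rw [one_mul]; exact hxj m)
  rw [← indicator_of_mem hxQ g]
  refine le_of_tendsto' (hx.comp hcubes) fun m => ?_
  rw [Function.comp_apply, ENNReal.div_eq_inv_mul,
    setLIntegral_indicator measurableSet_closedBall,
    inter_eq_right.2 (dyadicSub_subset_closedBall hr.le (hj m))]
  exact le_dyadicMax (hj m) (hxj m)

end DyadicCube

section CalderonZygmund

variable {n : ℕ} {c : Fin n → ℝ} {r : ℝ} {g : (Fin n → ℝ) → ℝ≥0∞} {t : ℝ≥0∞}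

def IsHeavyDyadic (c : Fin n → ℝ) (r : ℝ) (g : (Fin n → ℝ) → ℝ≥0∞) (t : ℝ≥0∞)
    (p : ℕ × (Fin n → ℕ)) : Prop :=
  (∀ i, p.2 i < 2 ^ p.1) ∧
    t < (volume (dyadicSub c r p.1 p.2))⁻¹ * ∫⁻ y in dyadicSub c r p.1 p.2, g y

/-- `p = (m, j)` indexes `dyadicSub c r m j`; its ancestor of generation `m' ≤ m` is indexed by
`(m', j / 2 ^ (m - m'))`. -/
def IsMaximalHeavyDyadic (c : Fin n → ℝ) (r : ℝ) (g : (Fin n → ℝ) → ℝ≥0∞) (t : ℝ≥0∞)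
    (p : ℕ × (Fin n → ℕ)) : Prop :=
  IsHeavyDyadic c r g t p ∧ ∀ m < p.1, ¬ IsHeavyDyadic c r g t (m, fun i => p.2 i / 2 ^ (p.1 - m))

theorem IsHeavyDyadic.exists_isMaximalHeavyDyadic_superset (hr : 0 ≤ r) {p : ℕ × (Fin n → ℕ)}
    (hp : IsHeavyDyadic c r g t p) :
    ∃ q, IsMaximalHeavyDyadic c r g t q ∧ dyadicSub c r p.1 p.2 ⊆ dyadicSub c r q.1 q.2 := by
  obtain ⟨k, j⟩ := p
  have hex : ∃ m, IsHeavyDyadic c r g t (m, fun i => j i / 2 ^ (k - m)) := ⟨k, by simpa using hp⟩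
  classical
  set m := Nat.find hex
  have hmk : m ≤ k := Nat.find_min' hex (by simpa using hp)
  refine ⟨(m, fun i => j i / 2 ^ (k - m)), ⟨Nat.find_spec hex, fun m' hm' => ?_⟩,
    dyadicSub_subset_of_le hr hmk j⟩
  have hdiv : (fun i => j i / 2 ^ (k - m) / 2 ^ (m - m')) = fun i => j i / 2 ^ (k - m') := by
    funext i
    rw [Nat.div_div_eq_div_mul, ← pow_add]
    congr 2
    omega
  simpa only [hdiv] using Nat.find_min hex hm'

theorem IsMaximalHeavyDyadic.setLIntegral_le (hr : 0 < r)
    (hQ : (volume (closedBall c r))⁻¹ * ∫⁻ y in closedBall c r, g y ≤ t)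
    {q : ℕ × (Fin n → ℕ)} (hq : IsMaximalHeavyDyadic c r g t q) :
    ∫⁻ y in dyadicSub c r q.1 q.2, g y ≤ 2 ^ n * t * volume (dyadicSub c r q.1 q.2) := by
  obtain ⟨_ | m, j⟩ := q <;> obtain ⟨⟨hj, hheavy⟩, hmax⟩ := hq
  · have hj0 : j = 0 := funext fun i => Nat.lt_one_iff.1 (hj i)
    subst hj0
    rw [dyadicSub_zero_zero] at hheavy
    exact absurd hQ hheavy.not_ge
  · have hparent : (volume (dyadicSub c r m fun i => j i / 2))⁻¹ *
        ∫⁻ y in dyadicSub c r m (fun i => j i / 2), g y ≤ t := by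
      refine not_lt.1 fun h => hmax m (Nat.lt_succ_self m) ⟨fun i => ?_, ?_⟩
      · exact Nat.div_lt_of_lt_mul (by simpa [pow_succ, mul_comm] using hj i)
      · simpa using h
    rw [ENNReal.inv_mul_le_iff (volume_dyadicSub_ne_zero hr _ _)
      (volume_dyadicSub_ne_top hr.le _ _)] at hparent
    calc ∫⁻ y in dyadicSub c r (m + 1) j, g y
        ≤ ∫⁻ y in dyadicSub c r m (fun i => j i / 2), g y :=
          lintegral_mono_set (by simpa using dyadicSub_subset_of_le hr.le m.le_succ j)
      _ ≤ _ := hparent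
      _ = 2 ^ n * t * volume (dyadicSub c r (m + 1) j) := by
          rw [volume_dyadicSub_eq_two_pow_mul_succ hr.le m _ j]; ring

theorem IsMaximalHeavyDyadic.volume_inter_eq_zero (hr : 0 ≤ r) {p q : ℕ × (Fin n → ℕ)}
    (hp : IsMaximalHeavyDyadic c r g t p) (hq : IsMaximalHeavyDyadic c r g t q) (hpq : p ≠ q) :
    volume (dyadicSub c r p.1 p.2 ∩ dyadicSub c r q.1 q.2) = 0 := by
  wlog hle : p.1 ≤ q.1 generalizing p q
  · rw [inter_comm]; exact this hq hp hpq.symm (le_of_not_ge hle)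
  obtain ⟨m, j⟩ := p
  obtain ⟨k, j'⟩ := q
  by_cases hanc : (fun i => j' i / 2 ^ (k - m)) = j
  · rcases hle.lt_or_eq with hlt | rfl
    · exact absurd (hanc ▸ hp.1) (hq.2 m hlt)
    · exact absurd (by simpa using hanc.symm) hpq
  · refine measure_mono_null (inter_subset_inter_right _ (dyadicSub_subset_of_le hr hle j')) ?_
    exact volume_dyadicSub_inter_eq_zero hr m (Ne.symm hanc)

theorem setOf_lt_dyadicMax_inter_closedBall (hr : 0 < r) :
    {x | t < dyadicMax c r g x} ∩ closedBall c r =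
      ⋃ q : {q // IsMaximalHeavyDyadic c r g t q}, dyadicSub c r q.1.1 q.1.2 := by
  refine Subset.antisymm (fun x ⟨hx, _⟩ => ?_) (iUnion_subset fun ⟨q, hq, _⟩ x hx =>
    ⟨hq.2.trans_le (le_dyadicMax hq.1 hx), dyadicSub_subset_closedBall hr.le hq.1 hx⟩)
  obtain ⟨m, hm⟩ := lt_iSup_iff.1 (show t < dyadicMax c r g x from hx)
  obtain ⟨j, hj⟩ := lt_iSup_iff.1 hm
  obtain ⟨hjm, hj⟩ := lt_iSup_iff.1 hj
  obtain ⟨hxj, hlt⟩ := lt_iSup_iff.1 hj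
  obtain ⟨q, hq, hsub⟩ :=
    IsHeavyDyadic.exists_isMaximalHeavyDyadic_superset (p := (m, j)) hr.le ⟨hjm, hlt⟩
  exact mem_iUnion.2 ⟨⟨q, hq⟩, hsub hxj⟩

theorem setLIntegral_setOf_lt_dyadicMax_le (hr : 0 < r)
    (hQ : (volume (closedBall c r))⁻¹ * ∫⁻ y in closedBall c r, g y ≤ t) :
    ∫⁻ y in {x | t < dyadicMax c r g x} ∩ closedBall c r, g y ≤
      2 ^ n * t * volume ({x | t < dyadicMax c r g x} ∩ closedBall c r) := by
  rw [setOf_lt_dyadicMax_inter_closedBall hr]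
  calc _ ≤ ∑' q : {q // IsMaximalHeavyDyadic c r g t q},
          ∫⁻ y in dyadicSub c r q.1.1 q.1.2, g y :=
        lintegral_iUnion_le _ _
    _ ≤ ∑' q : {q // IsMaximalHeavyDyadic c r g t q},
          2 ^ n * t * volume (dyadicSub c r q.1.1 q.1.2) :=
        ENNReal.tsum_le_tsum fun q => q.2.setLIntegral_le hr hQ
    _ = _ := by
        rw [ENNReal.tsum_mul_left]
        exact congrArg _ (measure_iUnion₀ (fun q q' hqq' =>
          q.2.volume_inter_eq_zero hr.le q'.2 (Subtype.coe_ne_coe.2 hqq'))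
          (fun _ => measurableSet_closedBall.nullMeasurableSet)).symm

end CalderonZygmund

theorem statement16_general (n : ℕ)
    (w : (Fin n → ℝ) → ℝ) (hloc : LocallyIntegrable w volume)
    (c : Fin n → ℝ) (r : ℝ) (hr : 0 < r) (δ : ℝ) (hδ : 0 < δ) :
    (volume (closedBall c r))⁻¹ *
        ∫⁻ x in closedBall c r, ENNReal.ofReal (w x) ^ (1 + δ) ≤
      ((volume (closedBall c r))⁻¹ * ∫⁻ x in closedBall c r, ENNReal.ofReal (w x)) ^
          (1 + δ) +
        (2 : ℝ≥0∞) ^ n * ENNReal.ofReal (δ / (δ + 1)) *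
          ((volume (closedBall c r))⁻¹ *
            ∫⁻ x in closedBall c r,
              (dyadicMax c r (fun y => ENNReal.ofReal (w y)) x) ^ (1 + δ)) := by
  have hQ0 : volume (closedBall c r) ≠ 0 := by
    simpa only [dyadicSub_zero_zero] using volume_dyadicSub_ne_zero (c := c) hr 0 0
  have hQtop : volume (closedBall c r) ≠ ⊤ := by
    simpa only [dyadicSub_zero_zero] using volume_dyadicSub_ne_top (c := c) hr.le 0 0
  set Q := closedBall c r
  set f : (Fin n → ℝ) → ℝ≥0∞ := fun y => ENNReal.ofReal (w y)
  set A := (volume Q)⁻¹ * ∫⁻ x in Q, f x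
  have hf : AEMeasurable f := hloc.aestronglyMeasurable.aemeasurable.ennreal_ofReal
  have hfin : ∫⁻ x in Q, f x ≠ ⊤ :=
    ((lintegral_mono fun x => Real.ofReal_le_enorm (w x)).trans_lt
      (hloc.integrableOn_isCompact (isCompact_closedBall c r)).2).ne
  have hfA : ∫⁻ x in Q, f x = A * volume Q := by
    rw [mul_comm, ← mul_assoc, ENNReal.mul_inv_cancel hQ0 hQtop, one_mul]
  have hlevel : ∀ t, MeasurableSet {x | t < dyadicMax c r f x} := fun t =>
    measurableSet_lt measurable_const (measurable_dyadicMax f)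
  have hmain := lintegral_rpow_one_add_le_of_weakType (ν := volume.restrict Q) hf.restrict
    (measurable_dyadicMax f)
    ((ae_restrict_iff' measurableSet_closedBall).2 (ae_le_dyadicMax hr hf hfin))
    (ENNReal.mul_ne_top (ENNReal.inv_ne_top.2 hQ0) hfin)
    (by rw [Measure.restrict_apply_univ]; exact hfA.le)
    (fun t ht => by
      rw [Measure.restrict_restrict (hlevel t), Measure.restrict_apply (hlevel t)]
      exact setLIntegral_setOf_lt_dyadicMax_le hr ht.le) hδ
  rw [Measure.restrict_apply_univ] at hmain
  calc _ ≤ (volume Q)⁻¹ * (A ^ (1 + δ) * volume Q + 2 ^ n * ENNReal.ofReal (δ / (δ + 1)) *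
        ∫⁻ x in Q, dyadicMax c r f x ^ (1 + δ)) := by gcongr
    _ = _ := by
        rw [mul_add, mul_comm (A ^ _), ← mul_assoc, ENNReal.inv_mul_cancel hQ0 hQtop, one_mul,
          mul_left_comm]

/-- **Dyadic local estimate.** For any weight `w`, cube `Q` and `δ > 0`:
`⨍_Q w^(1+δ) ≤ (⨍_Q w)^(1+δ) + 2ⁿ (δ/(δ+1)) ⨍_Q (M_{d,Q} w)^(1+δ)`. -/
theorem statement16 (n : ℕ) (hn : 1 ≤ n)
    (w : (Fin n → ℝ) → ℝ) (hw : ∀ x, 0 ≤ w x) (hloc : LocallyIntegrable w volume)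
    (c : Fin n → ℝ) (r : ℝ) (hr : 0 < r) (δ : ℝ) (hδ : 0 < δ) :
    (volume (closedBall c r))⁻¹ *
        ∫⁻ x in closedBall c r, ENNReal.ofReal (w x) ^ (1 + δ) ≤
      ((volume (closedBall c r))⁻¹ * ∫⁻ x in closedBall c r, ENNReal.ofReal (w x)) ^
          (1 + δ) +
        (2 : ℝ≥0∞) ^ n * ENNReal.ofReal (δ / (δ + 1)) *
          ((volume (closedBall c r))⁻¹ *
            ∫⁻ x in closedBall c r,
              (dyadicMax c r (fun y => ENNReal.ofReal (w y)) x) ^ (1 + δ)) :=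
  statement16_general n w hloc c r hr δ hδ
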